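/- For every k ≥ 1 and all nonzero integers m_1, n_1, …, m_k, n_k, the trace tr(A^{m_1} B^{n_1} ⋯ A^{m_k} B^{n_k}) is nonzero; in fact the product matrix is decreasing and hence not equal to ±identity. -/

import Mathlib

open Matrix

namespace Stmt19Aux

abbrev SL2 := Matrix.SpecialLinearGroup (Fin 2) ℤ

def Dec (X : Matrix (Fin 2) (Fin 2) ℤ) : Prop :=
  |X 0 0| > |X 1 0| ∧ |X 1 0| > |X 1 1| ∧ |X 0 0| > |X 0 1| ∧ |X 0 1| > |X 1 1|

set_option maxHeartbeats 1000000 in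
lemma base (m n : ℤ) (hm : m ≠ 0) (hn : n ≠ 0) :
    Dec !![1 - 4*m*n, 2*m; -2*n, 1] := by
  have hM : (1:ℤ) ≤ |m| := Int.one_le_abs hm
  have hN : (1:ℤ) ≤ |n| := Int.one_le_abs hn
  have h1 : |1 - 4*m*n| ≥ 4 * (|m| * |n|) - 1 := by
    have h := abs_sub_abs_le_abs_sub (4*m*n) (1:ℤ)
    rw [abs_sub_comm] at h
    have h2 : |4*m*n| = 4 * (|m| * |n|) := by
      rw [show 4*m*n = 4*(m*n) by ring, abs_mul, abs_mul]
      norm_num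
    simp only [abs_one] at h
    linarith
  have h2m : |(2:ℤ)*m| = 2 * |m| := by rw [abs_mul]; norm_num
  have h2n : |(-2:ℤ)*n| = 2 * |n| := by rw [abs_mul]; norm_num
  have hmn : 1 ≤ |m| * |n| := by nlinarith
  refine ⟨?_, ?_, ?_, ?_⟩ <;>
    simp only [Matrix.cons_val', Matrix.cons_val_zero, Matrix.cons_val_one,
      Matrix.head_cons, Matrix.empty_val', Matrix.cons_val_fin_one, Matrix.head_fin_const,
      Matrix.of_apply, abs_one] <;>
    [rw [h2n]; rw [h2n]; rw [h2m]; rw [h2m]] <;> nlinarith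

set_option maxHeartbeats 1000000 in
lemma step (m n : ℤ) (hm : m ≠ 0) (hn : n ≠ 0) (X : Matrix (Fin 2) (Fin 2) ℤ)
    (hdet : X.det = 1) (hX : Dec X) :
    Dec (!![1 - 4*m*n, 2*m; -2*n, 1] * X) := by
  obtain ⟨h1, h2, h3, h4⟩ := hX
  have hM : (1:ℤ) ≤ |m| := Int.one_le_abs hm
  have hN : (1:ℤ) ≤ |n| := Int.one_le_abs hn
  set a := X 0 0 with ha
  set c := X 0 1 with hc
  set b := X 1 0 with hb
  set d := X 1 1 with hd
  have hdet' : a * d - c * b = 1 := by rw [Matrix.det_fin_two] at hdet; exact hdet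
  set r := b - 2*n*a with hr
  set s := d - 2*n*c with hs
  set p := a + 2*m*r with hp
  set q := c + 2*m*s with hq
  have hd0 : 0 ≤ |d| := abs_nonneg d
  have hc1 : 1 ≤ |c| := by linarith
  have hb1 : 1 ≤ |b| := by linarith
  have ha2 : 2 ≤ |a| := by linarith
  have hRlb : 2 * (|n| * |a|) - |b| ≤ |r| := by
    have h := abs_sub_abs_le_abs_sub (2*n*a) b
    rw [abs_sub_comm] at h
    have h2 : |2*n*a| = 2 * (|n| * |a|) := by
      rw [show 2*n*a = 2*(n*a) by ring, abs_mul, abs_mul]; norm_num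
    rw [h2] at h; exact h
  have hSlb : 2 * (|n| * |c|) - |d| ≤ |s| := by
    have h := abs_sub_abs_le_abs_sub (2*n*c) d
    rw [abs_sub_comm] at h
    have h2 : |2*n*c| = 2 * (|n| * |c|) := by
      rw [show 2*n*c = 2*(n*c) by ring, abs_mul, abs_mul]; norm_num
    rw [h2] at h; exact h
  have hRa : |a| < |r| := by
    have k := mul_le_mul_of_nonneg_right hN (abs_nonneg a)
    nlinarith
  have hSc : |c| < |s| := by
    have k := mul_le_mul_of_nonneg_right hN (abs_nonneg c)
    nlinarith
  have hcr : c * r = a * s - 1 := by rw [hr, hs]; linear_combination -hdet'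
  have hRS : |s| < |r| := by
    have h := abs_sub_abs_le_abs_sub (a*s) (1:ℤ)
    rw [← hcr, abs_mul, abs_mul, abs_one] at h
    by_contra hcon
    push_neg at hcon
    have k1 : (|c| + 1) * |s| ≤ |a| * |s| :=
      mul_le_mul_of_nonneg_right (by linarith) (abs_nonneg s)
    have k2 : |c| * |r| ≤ |c| * |s| := mul_le_mul_of_nonneg_left hcon (abs_nonneg c)
    nlinarith
  have hPlb : 2 * (|m| * |r|) - |a| ≤ |p| := by
    have h := abs_sub_abs_le_abs_sub (2*m*r) (-a)
    rw [show 2*m*r - -a = p by rw [hp]; ring, abs_neg] at h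
    have h2 : |2*m*r| = 2 * (|m| * |r|) := by
      rw [show 2*m*r = 2*(m*r) by ring, abs_mul, abs_mul]; norm_num
    rw [h2] at h; exact h
  have hQlb : 2 * (|m| * |s|) - |c| ≤ |q| := by
    have h := abs_sub_abs_le_abs_sub (2*m*s) (-c)
    rw [show 2*m*s - -c = q by rw [hq]; ring, abs_neg] at h
    have h2 : |2*m*s| = 2 * (|m| * |s|) := by
      rw [show 2*m*s = 2*(m*s) by ring, abs_mul, abs_mul]; norm_num
    rw [h2] at h; exact h
  have hPR : |r| < |p| := by
    have k := mul_le_mul_of_nonneg_right hM (abs_nonneg r)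
    nlinarith
  have hQS : |s| < |q| := by
    have k := mul_le_mul_of_nonneg_right hM (abs_nonneg s)
    nlinarith
  have hqr : q * r = p * s - 1 := by rw [hp, hq]; linear_combination hcr
  have hPQ : |q| < |p| := by
    have h : |q| * |r| ≤ |p| * |s| + 1 := by
      have h0 : |q * r| ≤ |p*s| + |(1:ℤ)| := by rw [hqr]; exact abs_sub _ _
      rw [abs_mul, abs_mul, abs_one] at h0; exact h0
    by_contra hcon
    push_neg at hcon
    have k1 : |p| * |r| ≤ |q| * |r| := mul_le_mul_of_nonneg_right hcon (abs_nonneg r)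
    have k2 : |p| * |s| ≤ |p| * (|r| - 1) :=
      mul_le_mul_of_nonneg_left (by linarith) (by linarith)
    nlinarith
  have e00 : (!![1 - 4*m*n, 2*m; -2*n, 1] * X) 0 0 = p := by
    simp [Matrix.mul_apply, Fin.sum_univ_two, hp, hr, ← ha, ← hb]; ring
  have e01 : (!![1 - 4*m*n, 2*m; -2*n, 1] * X) 0 1 = q := by
    simp [Matrix.mul_apply, Fin.sum_univ_two, hq, hs, ← hc, ← hd]; ring
  have e10 : (!![1 - 4*m*n, 2*m; -2*n, 1] * X) 1 0 = r := by
    simp [Matrix.mul_apply, Fin.sum_univ_two, hr, ← ha, ← hb]; ring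
  have e11 : (!![1 - 4*m*n, 2*m; -2*n, 1] * X) 1 1 = s := by
    simp [Matrix.mul_apply, Fin.sum_univ_two, hs, ← hc, ← hd]; ring
  exact ⟨by rw [e00, e10]; exact hPR, by rw [e10, e11]; exact hRS,
    by rw [e00, e01]; exact hPQ, by rw [e01, e11]; exact hQS⟩

set_option maxHeartbeats 1000000 in
lemma listProd : ∀ (l : List SL2), l ≠ [] →
    (∀ M ∈ l, ∃ m n : ℤ, m ≠ 0 ∧ n ≠ 0 ∧
      (M : Matrix (Fin 2) (Fin 2) ℤ) = !![1 - 4*m*n, 2*m; -2*n, 1]) →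
    Dec ((l.prod : SL2) : Matrix (Fin 2) (Fin 2) ℤ) := by
  intro l
  induction l with
  | nil => intro h; exact absurd rfl h
  | cons M t ih =>
    intro _ hmem
    obtain ⟨m, n, hm, hn, hMco⟩ := hmem M List.mem_cons_self
    rcases t with _ | ⟨N, t'⟩
    · simpa [hMco] using base m n hm hn
    · have hdec := ih (by simp) (fun M' hM' => hmem M' (List.mem_cons_of_mem _ hM'))
      rw [List.prod_cons, Matrix.SpecialLinearGroup.coe_mul, hMco]
      exact step m n hm hn _ (Matrix.SpecialLinearGroup.det_coe _) hdec

set_option maxHeartbeats 1000000 in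
lemma pow_fact (A : SL2) (hA : (A : Matrix (Fin 2) (Fin 2) ℤ) = !![1, 2; 0, 1]) (m : ℤ) :
    ((A ^ m : SL2) : Matrix (Fin 2) (Fin 2) ℤ) = !![1, 2*m; 0, 1] := by
  have hAinv : ((A⁻¹ : SL2) : Matrix (Fin 2) (Fin 2) ℤ) = !![1, -2; 0, 1] := by
    rw [Matrix.SpecialLinearGroup.SL2_inv_expl]
    ext i j
    fin_cases i <;> fin_cases j <;> simp [hA]
  induction m using Int.induction_on with
  | zero => ext i j; fin_cases i <;> fin_cases j <;> simp
  | succ k ihk =>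
    rw [_root_.zpow_add_one, Matrix.SpecialLinearGroup.coe_mul, ihk, hA, Matrix.mul_fin_two]
    ext i j
    fin_cases i <;> fin_cases j <;> simp <;> ring
  | pred k ihk =>
    rw [_root_.zpow_sub_one, Matrix.SpecialLinearGroup.coe_mul, ihk, hAinv, Matrix.mul_fin_two]
    ext i j
    fin_cases i <;> fin_cases j <;> simp <;> ring

set_option maxHeartbeats 1000000 in
lemma pow_factB (B : SL2) (hB : (B : Matrix (Fin 2) (Fin 2) ℤ) = !![1, 0; -2, 1]) (n : ℤ) :
    ((B ^ n : SL2) : Matrix (Fin 2) (Fin 2) ℤ) = !![1, 0; -2*n, 1] := by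
  have hBinv : ((B⁻¹ : SL2) : Matrix (Fin 2) (Fin 2) ℤ) = !![1, 0; 2, 1] := by
    rw [Matrix.SpecialLinearGroup.SL2_inv_expl]
    ext i j
    fin_cases i <;> fin_cases j <;> simp [hB]
  induction n using Int.induction_on with
  | zero => ext i j; fin_cases i <;> fin_cases j <;> simp
  | succ k ihk =>
    rw [_root_.zpow_add_one, Matrix.SpecialLinearGroup.coe_mul, ihk, hB, Matrix.mul_fin_two]
    ext i j
    fin_cases i <;> fin_cases j <;> simp <;> ring
  | pred k ihk =>
    rw [_root_.zpow_sub_one, Matrix.SpecialLinearGroup.coe_mul, ihk, hBinv, Matrix.mul_fin_two]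
    ext i j
    fin_cases i <;> fin_cases j <;> simp <;> ring

end Stmt19Aux

open Stmt19Aux in
set_option maxHeartbeats 1000000 in
/-- For every k ≥ 1 and nonzero integers m₁,n₁,…,m_k,n_k, the matrix
A^{m₁}B^{n₁}⋯A^{m_k}B^{n_k} is decreasing, and its trace is nonzero. -/
theorem stmt_19
    (A B : Matrix.SpecialLinearGroup (Fin 2) ℤ)
    (hA : (A : Matrix (Fin 2) (Fin 2) ℤ) = !![1, 2; 0, 1])
    (hB : (B : Matrix (Fin 2) (Fin 2) ℤ) = !![1, 0; -2, 1])
    (k : ℕ) (hk : 1 ≤ k) (m n : Fin k → ℤ)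
    (hm : ∀ i, m i ≠ 0) (hn : ∀ i, n i ≠ 0) :
    let P : Matrix (Fin 2) (Fin 2) ℤ :=
      ((List.ofFn (fun i : Fin k => A ^ m i * B ^ n i)).prod :
        Matrix.SpecialLinearGroup (Fin 2) ℤ)
    (|P 0 0| > |P 1 0| ∧ |P 1 0| > |P 1 1| ∧ |P 0 0| > |P 0 1| ∧ |P 0 1| > |P 1 1|) ∧
      Matrix.trace P ≠ 0 := by
  intro P
  have hne : (List.ofFn (fun i : Fin k => A ^ m i * B ^ n i)) ≠ [] := by
    intro h
    have h2 := congrArg List.length h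
    simp at h2
    omega
  have hdec : Dec P := by
    apply listProd _ hne
    intro M hM
    rw [List.mem_ofFn] at hM
    obtain ⟨i, hi⟩ := hM
    refine ⟨m i, n i, hm i, hn i, ?_⟩
    rw [← hi, Matrix.SpecialLinearGroup.coe_mul, pow_fact A hA (m i), pow_factB B hB (n i),
      Matrix.mul_fin_two]
    ext a b
    fin_cases a <;> fin_cases b <;> simp <;> ring
  obtain ⟨h1, h2, h3, h4⟩ := hdec
  refine ⟨⟨h1, h2, h3, h4⟩, ?_⟩
  rw [Matrix.trace_fin_two]
  intro h
  have hPP : P 0 0 = -(P 1 1) := by linarith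
  have habs : |P 0 0| = |P 1 1| := by rw [hPP, abs_neg]
  linarith
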